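/- Let π be the permutation of {0,1,2} swapping 1 and 2 and fixing 0. If ω, η ∈ Ω satisfy ω_i = π(η_i) for all i, then L_ω = L_η as subgroups of Aut(X*). -/

import Mathlib

/-!  Common setup: the group `Aut(X*)` of automorphisms of the rooted binary tree,
the Grigorchuk generators `a, b_ω, c_ω, d_ω`, and the subgroups `G_ω`, `L_ω`. -/

/-- Finite words over `X = {0,1}`: vertices of the rooted binary tree. -/
abbrev Word := List Bool

/-- `Aut(X*)`: bijections of the set of words which preserve word length
(hence fix the empty word) and preserve the prefix relation, as a subgroup of the
permutation group of `Word`. -/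
def TreeAut : Subgroup (Equiv.Perm Word) where
  carrier := {g | (∀ w : Word, (g w).length = w.length) ∧
      ∀ u v : Word, u <+: v ↔ g u <+: g v}
  one_mem' := ⟨fun _ => rfl, fun _ _ => Iff.rfl⟩
  mul_mem' := by
    rintro g h ⟨hg1, hg2⟩ ⟨hh1, hh2⟩
    refine ⟨fun w => ?_, fun u v => ?_⟩
    · simpa using (hg1 (h w)).trans (hh1 w)
    · simpa using (hh2 u v).trans (hg2 (h u) (h v))
  inv_mem' := by
    rintro g ⟨hg1, hg2⟩
    refine ⟨fun w => ?_, fun u v => ?_⟩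
    · have := hg1 (g⁻¹ w)
      rw [show g (g⁻¹ w) = w from g.apply_symm_apply w] at this
      exact this.symm
    · have := (hg2 (g⁻¹ u) (g⁻¹ v)).symm
      simpa using this

/-- Application of a tree automorphism to a word. -/
def ap (g : ↥TreeAut) (w : Word) : Word := (g : Equiv.Perm Word) w

/-- The root permutation `a` (as a map): `a(0v) = 1v`, `a(1v) = 0v`. -/
def aFun : Word → Word
  | [] => []
  | x :: v => (!x) :: v

/-- The common recursive pattern of the maps `b_ω, c_ω, d_ω`: on `0v` act by the
identity if `ω 0 = k` and by `a` otherwise, on `1v` recurse with the shifted sequence.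
(`k = 2` gives `b`, `k = 1` gives `c`, `k = 0` gives `d`.) -/
def genFun (k : Fin 3) : (ℕ → Fin 3) → Word → Word
  | _, [] => []
  | ω, false :: v => false :: (if ω 0 = k then v else aFun v)
  | ω, true :: v => true :: genFun k (fun n => ω (n + 1)) v

lemma aFun_invol : Function.Involutive aFun := by
  intro w; cases w with
  | nil => rfl
  | cons x v => simp [aFun]

lemma aFun_length : ∀ w : Word, (aFun w).length = w.length := by
  intro w; cases w <;> simp [aFun]

lemma aFun_prefix : ∀ u v : Word, u <+: v → aFun u <+: aFun v := by
  intro u v h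
  cases u with
  | nil => simp [aFun]
  | cons x u' =>
    cases v with
    | nil => simp at h
    | cons y v' =>
      rw [List.cons_prefix_cons] at h
      obtain ⟨rfl, h2⟩ := h
      simpa [aFun, List.cons_prefix_cons] using h2

lemma genFun_length (k : Fin 3) : ∀ (w : Word) (ω : ℕ → Fin 3),
    (genFun k ω w).length = w.length
  | [], _ => rfl
  | false :: v, ω => by
    by_cases h : ω 0 = k <;> simp [genFun, h, aFun_length]
  | true :: v, ω => by
    simp [genFun, genFun_length k v]

lemma genFun_invol (k : Fin 3) : ∀ (w : Word) (ω : ℕ → Fin 3),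
    genFun k ω (genFun k ω w) = w
  | [], _ => rfl
  | false :: v, ω => by
    by_cases h : ω 0 = k <;> simp [genFun, h, aFun_invol v]
  | true :: v, ω => by
    simp [genFun, genFun_invol k v]

lemma genFun_prefix (k : Fin 3) : ∀ (u v : Word) (ω : ℕ → Fin 3),
    u <+: v → genFun k ω u <+: genFun k ω v
  | [], v, ω, _ => by simp [genFun]
  | x :: u', [], ω, h => by simp at h
  | x :: u', y :: v', ω, h => by
    rw [List.cons_prefix_cons] at h
    obtain ⟨rfl, h2⟩ := h
    cases x with
    | false =>
      by_cases h0 : ω 0 = k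
      · simpa [genFun, h0, List.cons_prefix_cons] using h2
      · simpa [genFun, h0, List.cons_prefix_cons] using aFun_prefix u' v' h2
    | true =>
      simpa [genFun, List.cons_prefix_cons] using genFun_prefix k u' v' _ h2

/-- Build an element of `Aut(X*)` from an involutive, length-preserving,
prefix-preserving map. -/
def mkAut (f : Word → Word) (hinv : Function.Involutive f)
    (hlen : ∀ w, (f w).length = w.length)
    (hpre : ∀ u v : Word, u <+: v → f u <+: f v) : ↥TreeAut :=
  ⟨hinv.toPerm, by
    refine ⟨fun w => ?_, fun u v => ⟨fun h => ?_, fun h => ?_⟩⟩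
    · simpa using hlen w
    · simpa using hpre u v h
    · have := hpre _ _ (by simpa using h)
      simpa [hinv u, hinv v] using this⟩

/-- The automorphism `a`. -/
def aAut : ↥TreeAut := mkAut aFun aFun_invol aFun_length aFun_prefix

/-- The automorphism `b_ω`. -/
def bAut (ω : ℕ → Fin 3) : ↥TreeAut :=
  mkAut (genFun 2 ω) (fun w => genFun_invol 2 w ω) (fun w => genFun_length 2 w ω)
    (fun u v h => genFun_prefix 2 u v ω h)

/-- The automorphism `c_ω`. -/
def cAut (ω : ℕ → Fin 3) : ↥TreeAut :=
  mkAut (genFun 1 ω) (fun w => genFun_invol 1 w ω) (fun w => genFun_length 1 w ω)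
    (fun u v h => genFun_prefix 1 u v ω h)

/-- The automorphism `d_ω`. -/
def dAut (ω : ℕ → Fin 3) : ↥TreeAut :=
  mkAut (genFun 0 ω) (fun w => genFun_invol 0 w ω) (fun w => genFun_length 0 w ω)
    (fun u v h => genFun_prefix 0 u v ω h)

/-- `G_ω = ⟨a, b_ω, c_ω, d_ω⟩`. -/
def Ggrp (ω : ℕ → Fin 3) : Subgroup ↥TreeAut :=
  Subgroup.closure {aAut, bAut ω, cAut ω, dAut ω}

/-- `L_ω = ⟨a b_ω, d_ω⟩`. -/
def Lgrp (ω : ℕ → Fin 3) : Subgroup ↥TreeAut :=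
  Subgroup.closure {aAut * bAut ω, dAut ω}

/-- The `n`-fold shift `σⁿω`. -/
def shift (n : ℕ) (ω : ℕ → Fin 3) : ℕ → Fin 3 := fun m => ω (m + n)

/-- `Ω_∞`: sequences in which each of `0, 1, 2` occurs infinitely often. -/
def OmegaInf : Set (ℕ → Fin 3) := {ω | ∀ k : Fin 3, ∀ N : ℕ, ∃ n, N ≤ n ∧ ω n = k}

/-- `g` fixes every word of length `n`. -/
def fixesLevel (g : ↥TreeAut) (n : ℕ) : Prop := ∀ w : Word, w.length = n → ap g w = w

/-- The subgroup of all tree automorphisms acting trivially outside the subtree `uX*`. -/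
def ristSubgroup (u : Word) : Subgroup ↥TreeAut where
  carrier := {g | ∀ w : Word, ¬ u <+: w → ap g w = w}
  one_mem' := by intro w _; rfl
  mul_mem' := by
    intro g h hg hh w hw
    have e1 : ap g w = w := hg w hw
    have e2 : ap h w = w := hh w hw
    simp only [ap] at e1 e2
    show (g : Equiv.Perm Word) ((h : Equiv.Perm Word) w) = w
    rw [e2, e1]
  inv_mem' := by
    intro g hg w hw
    have h1' : ap g w = w := hg w hw
    have h1 : (g : Equiv.Perm Word) w = w := h1'
    show ((g : Equiv.Perm Word))⁻¹ w = w
    conv_lhs => rw [← h1]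
    simp

/-- The subgroup of all tree automorphisms fixing every word of length `n`
(the `n`-th level stabilizer in `Aut(X*)`). -/
def levelStab (n : ℕ) : Subgroup ↥TreeAut where
  carrier := {g | fixesLevel g n}
  one_mem' := by intro w _; rfl
  mul_mem' := by
    intro g h hg hh w hw
    have e1 : ap g w = w := hg w hw
    have e2 : ap h w = w := hh w hw
    simp only [ap] at e1 e2
    show (g : Equiv.Perm Word) ((h : Equiv.Perm Word) w) = w
    rw [e2, e1]
  inv_mem' := by
    intro g hg w hw
    have h1' : ap g w = w := hg w hw
    have h1 : (g : Equiv.Perm Word) w = w := h1'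
    show ((g : Equiv.Perm Word))⁻¹ w = w
    conv_lhs => rw [← h1]
    simp

/-- The rigid level stabilizer `Rist_G(n)`: the subgroup generated by the rigid vertex
stabilizers `Rist_G(u) = G ⊓ ristSubgroup u` over all words `u` of length `n`. -/
def ristLevel (G : Subgroup ↥TreeAut) (n : ℕ) : Subgroup ↥TreeAut :=
  ⨆ u ∈ {u : Word | u.length = n}, G ⊓ ristSubgroup u

/-- `G` acts transitively on each level of the tree. -/
def LevelTransitive (G : Subgroup ↥TreeAut) : Prop :=
  ∀ u v : Word, u.length = v.length → ∃ g ∈ G, ap g u = v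

/-- A set of tree automorphisms acts level transitively on the subtree `vX*`. -/
def LevelTransitiveOn (S : Set ↥TreeAut) (v : Word) : Prop :=
  ∀ u₁ u₂ : Word, u₁.length = u₂.length → ∃ g ∈ S, ap g (v ++ u₁) = v ++ u₂

/-- `L_{n,ω}`: `L_{0,ω} = L_ω` and `L_{n,ω}` is generated by the squares of
elements of `L_{n-1,ω}`. -/
def Lsq (ω : ℕ → Fin 3) : ℕ → Subgroup ↥TreeAut
  | 0 => Lgrp ω
  | n + 1 => Subgroup.closure {x | ∃ y ∈ Lsq ω n, x = y * y}

/-- `g` is active at the word `v`: the section `g_v` acts nontrivially on the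
one-letter words. -/
def IsActive (g : ↥TreeAut) (v : Word) : Prop :=
  ap g (v ++ [false]) ≠ ap g v ++ [false]

open scoped Classical in
/-- `p(g)_n`: the number of words of length `n` at which `g` is active, mod 2
(words of length `n` are enumerated as `List.ofFn f` for `f : Fin n → Bool`). -/
noncomputable def pMap (g : ↥TreeAut) (n : ℕ) : ZMod 2 :=
  (((Finset.univ : Finset (Fin n → Bool)).filter
    (fun f => IsActive g (List.ofFn f))).card : ZMod 2)

theorem Subgroup.closure_pair_mul_right {G : Type*} [Group G] (x y : G) :
    Subgroup.closure {x * y, y} = Subgroup.closure {x, y} := by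
  apply le_antisymm <;> rw [Subgroup.closure_le, Set.pair_subset_iff]
  · exact ⟨mul_mem (Subgroup.subset_closure (by simp)) (Subgroup.subset_closure (by simp)),
      Subgroup.subset_closure (by simp)⟩
  · refine ⟨?_, Subgroup.subset_closure (by simp)⟩
    simpa using mul_mem (Subgroup.subset_closure (Set.mem_insert (x * y) {y}))
      (inv_mem (Subgroup.subset_closure (Set.mem_insert_of_mem _ rfl)))

lemma genFun_congr {k k' : Fin 3} :
    ∀ {ω η : ℕ → Fin 3}, (∀ i, ω i = k ↔ η i = k') → ∀ w, genFun k ω w = genFun k' η w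
  | _, _, _, [] => rfl
  | _, _, h, false :: _ => by simp only [genFun, h 0]
  | _, _, h, true :: v => by simp only [genFun, genFun_congr (fun i => h (i + 1)) v]

/-- On `0v` exactly one of `b, c, d` acts trivially and the other two act by `a`. -/
lemma genFun_one_eq_comp : ∀ (ω : ℕ → Fin 3) (w : Word),
    genFun 1 ω w = genFun 2 ω (genFun 0 ω w)
  | _, [] => rfl
  | ω, false :: v => by
    simp only [genFun]
    generalize ω 0 = x
    fin_cases x <;> simp [aFun_invol v]
  | _, true :: v => by simp only [genFun, genFun_one_eq_comp _ v]

lemma bAut_eq_cAut {ω η : ℕ → Fin 3} (h : ∀ i, ω i = 2 ↔ η i = 1) : bAut ω = cAut η :=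
  Subtype.ext <| Equiv.ext <| genFun_congr h

lemma dAut_congr {ω η : ℕ → Fin 3} (h : ∀ i, ω i = 0 ↔ η i = 0) : dAut ω = dAut η :=
  Subtype.ext <| Equiv.ext <| genFun_congr h

lemma cAut_eq_bAut_mul_dAut (ω : ℕ → Fin 3) : cAut ω = bAut ω * dAut ω :=
  Subtype.ext <| Equiv.ext <| genFun_one_eq_comp ω

/-- if `ω_i = π(η_i)` for all `i`, where `π` swaps `1` and `2` and
fixes `0`, then `L_ω = L_η` as subgroups of `Aut(X*)`. -/
theorem statement12 (ω η : ℕ → Fin 3)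
    (h : ∀ i, ω i = Equiv.swap (1 : Fin 3) 2 (η i)) :
    Lgrp ω = Lgrp η := by
  have hswap : ∀ i k, ω i = Equiv.swap (1 : Fin 3) 2 k ↔ η i = k := fun i k => by
    rw [h i, (Equiv.swap (1 : Fin 3) 2).apply_eq_iff_eq]
  have hb : bAut ω = cAut η := bAut_eq_cAut fun i => hswap i 1
  have hd : dAut ω = dAut η := dAut_congr fun i => hswap i 0
  rw [Lgrp, Lgrp, hb, hd, cAut_eq_bAut_mul_dAut, ← mul_assoc,
    Subgroup.closure_pair_mul_right]
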